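/- arXiv:2008.11786 — 2 statements merged into one kernel-verified Lean document; each statement's English description precedes it below -/
import Mathlib

section
/- Main correctness of the PMLG gadget construction: for every deMorgan formula F over variable sets partitioned into A-variables and B-variables, and every pair of partial assignments (a, b), the recursively constructed pattern P_a(F) is matched by some source-to-sink path of the recursively constructed graph G_b(F) if and only if F(a, b) = 1. Moreover P_a(F) depends only on a and the formula, and G_b(F) depends only on b and the formula. -/
/-- A vertex-labeled directed graph over alphabet `{0,1}` (Bool). -/
structure LGraph (V : Type) where
  edge : V → V → Prop
  label : V → Bool

namespace LGraph
variable {V : Type}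

/-- A (nonempty) directed path: consecutive vertices joined by edges. -/
def isPath (G : LGraph V) (p : List V) : Prop := p ≠ [] ∧ p.Chain' G.edge

/-- The label string of a path. -/
def labels (G : LGraph V) (p : List V) : List Bool := p.map G.label

/-- `v` has no incoming edge. -/
def noIn (G : LGraph V) (v : V) : Prop := ∀ u, ¬ G.edge u v

/-- `v` has no outgoing edge. -/
def noOut (G : LGraph V) (v : V) : Prop := ∀ u, ¬ G.edge v u

/-- A maximal path: starts at a vertex with no incoming edges and
ends at a vertex with no outgoing edges. -/
def maxPath (G : LGraph V) (p : List V) : Prop :=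
  G.isPath p ∧ (∀ v, p.head? = some v → G.noIn v) ∧ (∀ v, p.getLast? = some v → G.noOut v)

/-- The string `P` is matched by some path from `s` to `t` in `G`. -/
def matches' (G : LGraph V) (s t : V) (P : List Bool) : Prop :=
  ∃ p, G.isPath p ∧ p.head? = some s ∧ p.getLast? = some t ∧ G.labels p = P

end LGraph

/-- Vertices of the universal graph `U(k+2)`: a source, `k` levels each
holding a `0`-vertex and a `1`-vertex, and a sink. -/
abbrev UVert (k : ℕ) : Type := Unit ⊕ ((Fin k × Bool) ⊕ Unit)

/-- The source of the universal graph. -/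
def Usrc (k : ℕ) : UVert k := Sum.inl ()

/-- The sink of the universal graph. -/
def Usnk (k : ℕ) : UVert k := Sum.inr (Sum.inr ())

/-- Edges of the universal graph: source to both vertices of level 0,
each vertex of a level to both vertices of the next level, each vertex of
the last level to the sink (and source to sink directly when `k = 0`). -/
def Uedge (k : ℕ) : UVert k → UVert k → Prop := fun u v =>
  match u, v with
  | Sum.inl _, Sum.inr (Sum.inl p) => p.1.val = 0
  | Sum.inl _, Sum.inr (Sum.inr _) => k = 0
  | Sum.inr (Sum.inl p), Sum.inr (Sum.inl q) => q.1.val = p.1.val + 1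
  | Sum.inr (Sum.inl p), Sum.inr (Sum.inr _) => p.1.val + 1 = k
  | _, _ => False

/-- Labels of the universal graph: source and sink are labeled `1`,
each level has one vertex labeled `0` and one labeled `1`. -/
def Ulabel (k : ℕ) : UVert k → Bool := fun v =>
  match v with
  | Sum.inr (Sum.inl p) => p.2
  | _ => true

/-- The universal graph with `k` intermediate levels, i.e. `U(k+2)`. -/
def UGraph (k : ℕ) : LGraph (UVert k) := ⟨Uedge k, Ulabel k⟩

namespace LGraph
variable {V1 V2 V : Type}

/-- Series composition: `G1` followed by `G2`, adding an edge from `t1`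
(the sink of `G1`) to `s2` (the source of `G2`). -/
def series (G1 : LGraph V1) (G2 : LGraph V2) (t1 : V1) (s2 : V2) : LGraph (V1 ⊕ V2) where
  edge u v :=
    match u, v with
    | Sum.inl a, Sum.inl b => G1.edge a b
    | Sum.inl a, Sum.inr b => a = t1 ∧ b = s2
    | Sum.inr a, Sum.inr b => G2.edge a b
    | Sum.inr _, Sum.inl _ => False
  label := Sum.elim G1.label G2.label

/-- Wrapping: add a new source labeled `1` with an edge to `s` and a new
sink labeled `1` with an edge from `t`. -/
def wrap (G : LGraph V) (s t : V) : LGraph (Unit ⊕ V ⊕ Unit) where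
  edge u v :=
    match u, v with
    | Sum.inl _, Sum.inr (Sum.inl b) => b = s
    | Sum.inr (Sum.inl a), Sum.inr (Sum.inl b) => G.edge a b
    | Sum.inr (Sum.inl a), Sum.inr (Sum.inr _) => a = t
    | _, _ => False
  label := Sum.elim (fun _ => true) (Sum.elim G.label (fun _ => true))

/-- Parallel composition with wrapping: a new source labeled `1` branching
to the sources `s1` of `G1` and `s2` of `G2`, and the sinks `t1`, `t2`
both leading to a new sink labeled `1`. -/
def parwrap (G1 : LGraph V1) (G2 : LGraph V2) (s1 t1 : V1) (s2 t2 : V2) :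
    LGraph (Unit ⊕ (V1 ⊕ V2) ⊕ Unit) where
  edge u v :=
    match u, v with
    | Sum.inl _, Sum.inr (Sum.inl (Sum.inl b)) => b = s1
    | Sum.inl _, Sum.inr (Sum.inl (Sum.inr b)) => b = s2
    | Sum.inr (Sum.inl (Sum.inl a)), Sum.inr (Sum.inl (Sum.inl b)) => G1.edge a b
    | Sum.inr (Sum.inl (Sum.inr a)), Sum.inr (Sum.inl (Sum.inr b)) => G2.edge a b
    | Sum.inr (Sum.inl (Sum.inl a)), Sum.inr (Sum.inr _) => a = t1
    | Sum.inr (Sum.inl (Sum.inr a)), Sum.inr (Sum.inr _) => a = t2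
    | _, _ => False
  label := Sum.elim (fun _ => true) (Sum.elim (Sum.elim G1.label G2.label) (fun _ => true))

end LGraph
/-- A read-once deMorgan formula gate over `m` A-variables and `m`
B-variables: leaves read an A-variable or a B-variable, internal gates are
∧ or ∨. -/
inductive Gate (m : ℕ) : Type where
  | avar (i : Fin m) : Gate m
  | bvar (j : Fin m) : Gate m
  | and (g1 g2 : Gate m) : Gate m
  | or (g1 g2 : Gate m) : Gate m

/-- Size of (the subformula rooted at) a gate: its number of leaves. -/
def Gate.size {m : ℕ} : Gate m → ℕ
  | .avar _ => 1
  | .bvar _ => 1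
  | .and g1 g2 => g1.size + g2.size
  | .or g1 g2 => g1.size + g2.size

/-- Boolean evaluation under the combined assignment `(a, b)`. -/
def Gate.eval {m : ℕ} (a b : Fin m → Bool) : Gate m → Bool
  | .avar i => a i
  | .bvar j => b j
  | .and g1 g2 => g1.eval a b && g2.eval a b
  | .or g1 g2 => g1.eval a b || g2.eval a b

/-- The pattern `P_a(g)` of the PMLG construction: `1aᵢ1` for an A-variable
input gate, `111` for a B-variable input gate, and `1·P₁·P₂·1` for an
internal gate. -/
def Gate.pat {m : ℕ} (a : Fin m → Bool) : Gate m → List Bool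
  | .avar i => [true, a i, true]
  | .bvar _ => [true, true, true]
  | .and g1 g2 => true :: (g1.pat a ++ g2.pat a ++ [true])
  | .or g1 g2 => true :: (g1.pat a ++ g2.pat a ++ [true])

/-- The pattern length: `|P| = 3` for leaves, `|P₁| + |P₂| + 2` for gates. -/
def Gate.plen {m : ℕ} : Gate m → ℕ
  | .avar _ => 3
  | .bvar _ => 3
  | .and g1 g2 => g1.plen + g2.plen + 2
  | .or g1 g2 => g1.plen + g2.plen + 2

/-- The directed path graph on three vertices with labels `l0, l1, l2`. -/
def path3 (l0 l1 l2 : Bool) : LGraph (Fin 3) where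
  edge u v := v.val = u.val + 1
  label v := if v.val = 0 then l0 else if v.val = 1 then l1 else l2

/-- A labeled graph bundled with a designated source and sink vertex. -/
structure BG : Type 1 where
  V : Type
  G : LGraph V
  src : V
  snk : V

/-- The recursive PMLG graph construction `G_b(g)` (depending only on the
B-assignment `b` and the formula): input gates yield 3-vertex paths
(labeled `1,1,1` for A-variables and `1,b_j,1` for B-variables); an AND
gate puts the two subgraphs in series between a new source and sink
labeled `1`; an OR gate branches from a new source labeled `1` to
(`G₁` then `U(|P₂|)`) and to (`U(|P₁|)` then `G₂`), meeting at a new sink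
labeled `1`. -/
def build {m : ℕ} (b : Fin m → Bool) : Gate m → BG
  | .avar _ => ⟨Fin 3, path3 true true true, 0, 2⟩
  | .bvar j => ⟨Fin 3, path3 true (b j) true, 0, 2⟩
  | .and g1 g2 =>
      let B1 := build b g1
      let B2 := build b g2
      ⟨Unit ⊕ (B1.V ⊕ B2.V) ⊕ Unit,
        (B1.G.series B2.G B1.snk B2.src).wrap (Sum.inl B1.src) (Sum.inr B2.snk),
        Sum.inl (), Sum.inr (Sum.inr ())⟩
  | .or g1 g2 =>
      let B1 := build b g1
      let B2 := build b g2
      let k1 := g1.plen - 2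
      let k2 := g2.plen - 2
      ⟨Unit ⊕ ((B1.V ⊕ UVert k2) ⊕ (UVert k1 ⊕ B2.V)) ⊕ Unit,
        (B1.G.series (UGraph k2) B1.snk (Usrc k2)).parwrap
          ((UGraph k1).series B2.G (Usnk k1) B2.src)
          (Sum.inl B1.src) (Sum.inr (Usnk k2)) (Sum.inl (Usrc k1)) (Sum.inr B2.snk),
        Sum.inl (), Sum.inr (Sum.inr ())⟩

/-!
Matching a string along a source-to-sink path is compatible with the three gadget operations:
series composition concatenates the matched strings, wrapping turns a matched `Q` into `1Q1`,
and parallel wrapping takes the union of the two wrapped sets; the universal graph `U(k+2)`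
matches every `1w1` with `|w| = k`. By induction, every string matched by `G_b(g)` has the
length `|P_a(g)|`, so in `1P₁P₂1` the cut between the two halves is forced. An AND gate then
needs both halves matched by the subgadgets, while in an OR gate the universal graph absorbs the
half that belongs to the other branch.
-/

namespace LGraph

variable {V W : Type} {G : LGraph V} {H : LGraph W} {s t : V} {P : List Bool}

theorem matches'_iff :
    G.matches' s t P ↔
      (s = t ∧ P = [G.label s]) ∨ ∃ u Q, G.edge s u ∧ G.matches' u t Q ∧ P = G.label s :: Q := by
  constructor
  · rintro ⟨_ | ⟨x, _ | ⟨y, r⟩⟩, ⟨-, hc⟩, hs, ht, rfl⟩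
    · simp at hs
    · simp_all [labels]
    · obtain rfl : x = s := by simpa using hs
      obtain ⟨hxy, hc⟩ := List.isChain_cons_cons.mp hc
      exact .inr ⟨y, _, hxy, ⟨y :: r, ⟨by simp, hc⟩, rfl, by simpa using ht, rfl⟩, rfl⟩
  · rintro (⟨rfl, rfl⟩ | ⟨u, Q, hsu, ⟨_ | ⟨y, r⟩, ⟨-, hc⟩, hu, ht, rfl⟩, rfl⟩)
    · exact ⟨[s], ⟨by simp, List.isChain_singleton s⟩, rfl, rfl, rfl⟩
    · simp at hu
    · obtain rfl : y = u := by simpa using hu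
      exact ⟨s :: y :: r, ⟨by simp, List.isChain_cons_cons.mpr ⟨hsu, hc⟩⟩, rfl,
        by simpa using ht, rfl⟩

theorem matches'_singleton (v : V) : G.matches' v v [G.label v] :=
  matches'_iff.mpr (.inl ⟨rfl, rfl⟩)

theorem matches'.cons {u : V} (hsu : G.edge s u) (h : G.matches' u t P) :
    G.matches' s t (G.label s :: P) :=
  matches'_iff.mpr (.inr ⟨u, P, hsu, h, rfl⟩)

@[elab_as_elim]
theorem matches'.induction {motive : ∀ v Q, G.matches' v t Q → Prop} (h : G.matches' s t P)
    (singleton : motive t [G.label t] (matches'_singleton t))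
    (cons : ∀ v u Q (hvu : G.edge v u) (hu : G.matches' u t Q), motive u Q hu →
      motive v (G.label v :: Q) (hu.cons hvu)) :
    motive s P h := by
  induction P generalizing s with
  | nil => exfalso; rcases matches'_iff.mp h with ⟨-, hP⟩ | ⟨_, _, -, -, hP⟩ <;> simp at hP
  | cons c P ih =>
    rcases matches'_iff.mp h with ⟨rfl, hP⟩ | ⟨u, Q, hsu, hu, hP⟩
    · obtain ⟨rfl, rfl⟩ := List.cons.inj hP
      exact singleton
    · obtain ⟨rfl, rfl⟩ := List.cons.inj hP
      exact cons s u _ hsu hu (ih hu)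

theorem matches'.append {u v : V} {Q : List Bool} (hP : G.matches' s u P) (huv : G.edge u v)
    (hQ : G.matches' v t Q) : G.matches' s t (P ++ Q) := by
  induction hP using matches'.induction with
  | singleton => exact hQ.cons huv
  | cons w w' R hww' _ ih => exact ih.cons hww'

theorem matches'_eq_singleton_of_noOut (hs : G.noOut s) (h : G.matches' s t P) :
    P = [G.label s] := by
  rcases matches'_iff.mp h with ⟨-, rfl⟩ | ⟨u, -, hsu, -⟩
  · rfl
  · exact absurd hsu (hs u)

theorem matches'_length_of_potential (φ : V → ℕ) (hφ : ∀ u v, G.edge u v → φ v = φ u + 1)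
    (h : G.matches' s t P) : φ s + P.length = φ t + 1 := by
  induction h using matches'.induction with
  | singleton => rfl
  | cons v u Q hvu _ ih => rw [List.length_cons, hφ v u hvu] at *; omega

theorem matches'.map {f : V → W} (hlabel : ∀ a, H.label (f a) = G.label a)
    (hedge : ∀ a b, G.edge a b → H.edge (f a) (f b)) (h : G.matches' s t P) :
    H.matches' (f s) (f t) P := by
  induction h using matches'.induction with
  | singleton => rw [← hlabel]; exact matches'_singleton _
  | cons v u Q hvu _ ih => rw [← hlabel]; exact ih.cons (hedge v u hvu)

theorem matches'_of_map {f : V → W} (hf : f.Injective) (hlabel : ∀ a, H.label (f a) = G.label a)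
    (hedge : ∀ a w, H.edge (f a) w → ∃ b, w = f b ∧ G.edge a b)
    (h : H.matches' (f s) (f t) P) : G.matches' s t P := by
  suffices ∀ w, H.matches' w (f t) P → ∀ a, w = f a → G.matches' a t P from this _ h s rfl
  intro w hw
  clear h
  induction hw using matches'.induction with
  | singleton => rintro a ha; rw [← hf ha, hlabel]; exact matches'_singleton t
  | cons v u Q hvu _ ih =>
    rintro a rfl
    obtain ⟨b, rfl, hab⟩ := hedge a u hvu
    rw [hlabel]; exact (ih b rfl).cons hab

theorem matches'_split_of_map {f : V → W} {x : V} {e z : W}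
    (hlabel : ∀ a, H.label (f a) = G.label a)
    (hedge : ∀ a w, H.edge (f a) w → (∃ b, w = f b ∧ G.edge a b) ∨ (a = x ∧ w = e))
    (hfz : ∀ a, f a ≠ z) (h : H.matches' (f s) z P) :
    ∃ P₁ P₂, P = P₁ ++ P₂ ∧ G.matches' s x P₁ ∧ H.matches' e z P₂ := by
  suffices ∀ v, H.matches' v z P → ∀ a, v = f a →
      ∃ P₁ P₂, P = P₁ ++ P₂ ∧ G.matches' a x P₁ ∧ H.matches' e z P₂ from this _ h s rfl
  intro v hv
  clear h
  induction hv using matches'.induction with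
  | singleton => rintro a rfl; exact absurd rfl (hfz a)
  | cons v u Q hvu hu ih =>
    rintro a rfl
    rcases hedge a u hvu with ⟨b, rfl, hab⟩ | ⟨rfl, rfl⟩
    · obtain ⟨P₁, P₂, rfl, h₁, h₂⟩ := ih b rfl
      exact ⟨G.label a :: P₁, P₂, by rw [hlabel]; rfl, h₁.cons hab, h₂⟩
    · exact ⟨[G.label a], Q, by rw [hlabel]; rfl, matches'_singleton a, hu⟩

theorem matches'_to_noOut_of_map {f : V → W} {x : V} {z : W}
    (hlabel : ∀ a, H.label (f a) = G.label a)
    (hedge : ∀ a w, H.edge (f a) w → (∃ b, w = f b ∧ G.edge a b) ∨ (a = x ∧ w = z))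
    (hz : H.noOut z) (hfz : ∀ a, f a ≠ z) (h : H.matches' (f s) z P) :
    ∃ Q, P = Q ++ [H.label z] ∧ G.matches' s x Q := by
  obtain ⟨Q, R, rfl, hQ, hR⟩ := matches'_split_of_map hlabel hedge hfz h
  exact ⟨Q, by rw [matches'_eq_singleton_of_noOut hz hR], hQ⟩

variable {V1 V2 : Type}

theorem series_matches' (G1 : LGraph V1) (G2 : LGraph V2) (s1 t1 : V1) (s2 t2 : V2) :
    (G1.series G2 t1 s2).matches' (.inl s1) (.inr t2) P ↔
      ∃ P1 P2, P = P1 ++ P2 ∧ G1.matches' s1 t1 P1 ∧ G2.matches' s2 t2 P2 := by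
  constructor
  · intro h
    obtain ⟨P1, P2, rfl, h1, h2⟩ := matches'_split_of_map (G := G1) (f := Sum.inl) (x := t1)
      (fun _ => rfl)
      (by rintro a (b | b) hab; exacts [.inl ⟨b, rfl, hab⟩, .inr ⟨hab.1, by rw [hab.2]⟩])
      (fun _ => Sum.inl_ne_inr) h
    refine ⟨P1, P2, rfl, h1, matches'_of_map (f := Sum.inr) Sum.inr_injective (fun _ => rfl) ?_ h2⟩
    rintro a (b | b) hab
    exacts [hab.elim, ⟨b, rfl, hab⟩]
  · rintro ⟨P1, P2, rfl, h1, h2⟩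
    exact (h1.map (H := G1.series G2 t1 s2) (f := Sum.inl) (fun _ => rfl) fun _ _ => id).append
      (v := Sum.inr s2) ⟨rfl, rfl⟩ (h2.map (f := Sum.inr) (fun _ => rfl) fun _ _ => id)

theorem wrap_matches' (G : LGraph V) (s t : V) :
    (G.wrap s t).matches' (.inl ()) (.inr (.inr ())) P ↔
      ∃ Q, P = true :: Q ++ [true] ∧ G.matches' s t Q := by
  have hz : (G.wrap s t).noOut (.inr (.inr ())) := by
    rintro (_ | _ | _) h <;> exact h
  constructor
  · intro h
    obtain ⟨⟨⟩, -⟩ | ⟨u | (b | u), P', hu, hP', rfl⟩ := matches'_iff.mp h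
    · exact hu.elim
    · obtain rfl : b = s := hu
      obtain ⟨Q, rfl, hQ⟩ := matches'_to_noOut_of_map (H := G.wrap _ t)
        (f := Sum.inr ∘ Sum.inl) (x := t) (z := Sum.inr (Sum.inr ()))
        (fun _ => rfl)
        (by rintro a (_ | (b | _)) hab; exacts [hab.elim, .inl ⟨b, rfl, hab⟩, .inr ⟨hab, rfl⟩])
        hz (by simp) hP'
      exact ⟨Q, rfl, hQ⟩
    · exact hu.elim
  · rintro ⟨Q, rfl, h⟩
    exact ((h.map (H := G.wrap s t) (f := Sum.inr ∘ Sum.inl) (fun _ => rfl) fun _ _ => id).append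
      (v := Sum.inr (Sum.inr ())) rfl (matches'_singleton _)).cons (u := Sum.inr (Sum.inl s)) rfl

theorem parwrap_matches' (G1 : LGraph V1) (G2 : LGraph V2) (s1 t1 : V1) (s2 t2 : V2) :
    (G1.parwrap G2 s1 t1 s2 t2).matches' (.inl ()) (.inr (.inr ())) P ↔
      (∃ Q, P = true :: Q ++ [true] ∧ G1.matches' s1 t1 Q) ∨
      (∃ Q, P = true :: Q ++ [true] ∧ G2.matches' s2 t2 Q) := by
  have hz : (G1.parwrap G2 s1 t1 s2 t2).noOut (.inr (.inr ())) := by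
    rintro (_ | (_ | _) | _) h <;> exact h
  constructor
  · intro h
    obtain ⟨⟨⟩, -⟩ | ⟨u | (b | b) | u, P', hu, hP', rfl⟩ := matches'_iff.mp h
    · exact hu.elim
    · obtain rfl : b = s1 := hu
      obtain ⟨Q, rfl, hQ⟩ := matches'_to_noOut_of_map (H := G1.parwrap G2 _ t1 s2 t2)
        (f := Sum.inr ∘ Sum.inl ∘ Sum.inl) (x := t1) (z := Sum.inr (Sum.inr ())) (fun _ => rfl)
        (by
          rintro a (_ | (b | _) | _) hab
          exacts [hab.elim, .inl ⟨b, rfl, hab⟩, hab.elim, .inr ⟨hab, rfl⟩])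
        hz (by simp) hP'
      exact .inl ⟨Q, rfl, hQ⟩
    · obtain rfl : b = s2 := hu
      obtain ⟨Q, rfl, hQ⟩ := matches'_to_noOut_of_map (H := G1.parwrap G2 s1 t1 _ t2)
        (f := Sum.inr ∘ Sum.inl ∘ Sum.inr) (x := t2) (z := Sum.inr (Sum.inr ())) (fun _ => rfl)
        (by
          rintro a (_ | (_ | b) | _) hab
          exacts [hab.elim, hab.elim, .inl ⟨b, rfl, hab⟩, .inr ⟨hab, rfl⟩])
        hz (by simp) hP'
      exact .inr ⟨Q, rfl, hQ⟩
    · exact hu.elim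
  · rintro (⟨Q, rfl, h⟩ | ⟨Q, rfl, h⟩)
    · exact ((h.map (H := G1.parwrap G2 s1 t1 s2 t2) (f := Sum.inr ∘ Sum.inl ∘ Sum.inl)
        (fun _ => rfl) fun _ _ => id).append (v := Sum.inr (Sum.inr ())) rfl
        (matches'_singleton _)).cons (u := Sum.inr (Sum.inl (Sum.inl s1))) rfl
    · exact ((h.map (H := G1.parwrap G2 s1 t1 s2 t2) (f := Sum.inr ∘ Sum.inl ∘ Sum.inr)
        (fun _ => rfl) fun _ _ => id).append (v := Sum.inr (Sum.inr ())) rfl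
        (matches'_singleton _)).cons (u := Sum.inr (Sum.inl (Sum.inr s2))) rfl

end LGraph

def Ulevel (k : ℕ) : UVert k → ℕ
  | .inl _ => 0
  | .inr (.inl p) => p.1 + 1
  | .inr (.inr _) => k + 1

theorem Uedge_iff {k : ℕ} {u v : UVert k} : Uedge k u v ↔ Ulevel k v = Ulevel k u + 1 := by
  rcases u with _ | ⟨⟨i, hi⟩, _⟩ | _ <;> rcases v with _ | ⟨⟨j, hj⟩, _⟩ | _ <;>
    simp [Uedge, Ulevel] <;> omega

theorem UGraph_matches'_length {k : ℕ} {P : List Bool}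
    (h : (UGraph k).matches' (Usrc k) (Usnk k) P) : P.length = k + 2 := by
  have := LGraph.matches'_length_of_potential (Ulevel k) (fun _ _ => Uedge_iff.mp) h
  simp only [Ulevel, Usrc, Usnk] at this
  omega

theorem UGraph_matches'_from {k : ℕ} (w : List Bool) (v : UVert k)
    (hv : Ulevel k v + w.length = k) :
    (UGraph k).matches' v (Usnk k) (Ulabel k v :: w ++ [true]) := by
  induction w generalizing v with
  | nil =>
    refine (LGraph.matches'_singleton (Usnk k)).cons (Uedge_iff.mpr ?_)
    show k + 1 = Ulevel k v + 1
    simpa using hv.symm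
  | cons c w ih =>
    simp only [List.length_cons] at hv
    let u : UVert k := .inr (.inl (⟨Ulevel k v, by omega⟩, c))
    exact (ih u (show Ulevel k v + 1 + w.length = k by omega)).cons (u := u) (Uedge_iff.mpr rfl)

theorem UGraph_matches' {k : ℕ} (w : List Bool) (hw : w.length = k) :
    (UGraph k).matches' (Usrc k) (Usnk k) (true :: w ++ [true]) :=
  UGraph_matches'_from w (Usrc k) (by simp [Ulevel, Usrc, hw])

theorem path3_matches' {l0 l1 l2 : Bool} {P : List Bool} :
    (path3 l0 l1 l2).matches' 0 2 P ↔ P = [l0, l1, l2] := by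
  constructor
  · intro h
    obtain ⟨h02, -⟩ | ⟨u, Q, h0u, hQ, rfl⟩ := LGraph.matches'_iff.mp h
    · exact absurd h02 (by decide)
    obtain rfl : u = 1 := Fin.ext h0u
    obtain ⟨h12, -⟩ | ⟨u, R, h1u, hR, rfl⟩ := LGraph.matches'_iff.mp hQ
    · exact absurd h12 (by decide)
    obtain rfl : u = 2 := Fin.ext h1u
    rw [LGraph.matches'_eq_singleton_of_noOut (fun v h2v => by have := v.isLt; simp_all [path3]) hR]
    rfl
  · rintro rfl
    exact ((LGraph.matches'_singleton 2).cons (u := 2) rfl).cons (u := 1) rfl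

def BG.Accepts (B : BG) (P : List Bool) : Prop := B.G.matches' B.src B.snk P

theorem List.cons_append_append_singleton_inj {α : Type*} {x y : α} {p₁ p₂ q₁ q₂ : List α}
    (h : x :: (p₁ ++ p₂) ++ [y] = x :: (q₁ ++ q₂) ++ [y]) (hl : q₁.length = p₁.length) :
    q₁ = p₁ ∧ q₂ = p₂ :=
  List.append_inj (List.cons.inj (List.append_cancel_right h)).2.symm hl

namespace Gate

variable {m : ℕ} (a : Fin m → Bool)

theorem pat_length (g : Gate m) : (g.pat a).length = g.plen := by
  induction g <;> simp_all [pat, plen] <;> omega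

theorem two_le_plen (g : Gate m) : 2 ≤ g.plen := by
  cases g <;> simp [plen]

theorem exists_pat_eq (g : Gate m) : ∃ w, g.pat a = true :: w ++ [true] := by
  cases g with
  | avar i => exact ⟨[a i], rfl⟩
  | bvar j => exact ⟨[true], rfl⟩
  | and g1 g2 | or g1 g2 => exact ⟨g1.pat a ++ g2.pat a, rfl⟩

theorem UGraph_matches'_pat (g : Gate m) :
    (UGraph (g.plen - 2)).matches' (Usrc _) (Usnk _) (g.pat a) := by
  obtain ⟨w, hw⟩ := exists_pat_eq a g
  have := pat_length a g
  rw [hw] at this ⊢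
  exact UGraph_matches' w (by simp at this; omega)

end Gate

section build

variable {m : ℕ} (b : Fin m → Bool) {g1 g2 : Gate m} {L : List Bool}

theorem accepts_build_avar (i : Fin m) : (build b (.avar i)).Accepts L ↔ L = [true, true, true] :=
  path3_matches'

theorem accepts_build_bvar (j : Fin m) : (build b (.bvar j)).Accepts L ↔ L = [true, b j, true] :=
  path3_matches'

theorem accepts_build_and :
    (build b (.and g1 g2)).Accepts L ↔ ∃ Q1 Q2, L = true :: (Q1 ++ Q2) ++ [true] ∧
      (build b g1).Accepts Q1 ∧ (build b g2).Accepts Q2 := by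
  refine (LGraph.wrap_matches' _ _ _).trans ?_
  simp only [LGraph.series_matches']
  constructor
  · rintro ⟨_, rfl, Q1, Q2, rfl, h1, h2⟩
    exact ⟨Q1, Q2, rfl, h1, h2⟩
  · rintro ⟨Q1, Q2, rfl, h1, h2⟩
    exact ⟨_, rfl, Q1, Q2, rfl, h1, h2⟩

theorem accepts_build_or :
    (build b (.or g1 g2)).Accepts L ↔
      (∃ Q1 Q2, L = true :: (Q1 ++ Q2) ++ [true] ∧
        (build b g1).Accepts Q1 ∧ (UGraph (g2.plen - 2)).matches' (Usrc _) (Usnk _) Q2) ∨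
      (∃ Q1 Q2, L = true :: (Q1 ++ Q2) ++ [true] ∧
        (UGraph (g1.plen - 2)).matches' (Usrc _) (Usnk _) Q1 ∧ (build b g2).Accepts Q2) := by
  refine (LGraph.parwrap_matches' _ _ _ _ _ _).trans ?_
  simp only [LGraph.series_matches']
  constructor
  · rintro (⟨_, rfl, Q1, Q2, rfl, h1, h2⟩ | ⟨_, rfl, Q1, Q2, rfl, h1, h2⟩)
    exacts [.inl ⟨Q1, Q2, rfl, h1, h2⟩, .inr ⟨Q1, Q2, rfl, h1, h2⟩]
  · rintro (⟨Q1, Q2, rfl, h1, h2⟩ | ⟨Q1, Q2, rfl, h1, h2⟩)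
    exacts [.inl ⟨_, rfl, Q1, Q2, rfl, h1, h2⟩, .inr ⟨_, rfl, Q1, Q2, rfl, h1, h2⟩]

theorem length_of_accepts_build {g : Gate m} (h : (build b g).Accepts L) : L.length = g.plen := by
  induction g generalizing L with
  | avar i => rw [(accepts_build_avar b i).mp h]; rfl
  | bvar j => rw [(accepts_build_bvar b j).mp h]; rfl
  | and g1 g2 ih1 ih2 =>
    obtain ⟨Q1, Q2, rfl, h1, h2⟩ := (accepts_build_and b).mp h
    simp [Gate.plen, ih1 h1, ih2 h2]
    omega
  | or g1 g2 ih1 ih2 =>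
    have := g1.two_le_plen
    have := g2.two_le_plen
    rcases (accepts_build_or b).mp h with ⟨Q1, Q2, rfl, h1, h2⟩ | ⟨Q1, Q2, rfl, h1, h2⟩
    · simp [Gate.plen, ih1 h1, UGraph_matches'_length h2]
      omega
    · simp [Gate.plen, UGraph_matches'_length h1, ih2 h2]
      omega

theorem accepts_build_pat_iff (a : Fin m → Bool) (g : Gate m) :
    (build b g).Accepts (g.pat a) ↔ g.eval a b = true := by
  induction g with
  | avar i => simp [accepts_build_avar, Gate.pat, Gate.eval]
  | bvar j => simp [accepts_build_bvar, Gate.pat, Gate.eval]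
  | and g1 g2 ih1 ih2 =>
    rw [accepts_build_and, Gate.eval, Bool.and_eq_true, ← ih1, ← ih2]
    constructor
    · rintro ⟨Q1, Q2, hQ, h1, h2⟩
      obtain ⟨rfl, rfl⟩ := List.cons_append_append_singleton_inj hQ
        ((length_of_accepts_build b h1).trans (g1.pat_length a).symm)
      exact ⟨h1, h2⟩
    · rintro ⟨h1, h2⟩
      exact ⟨_, _, rfl, h1, h2⟩
  | or g1 g2 ih1 ih2 =>
    rw [accepts_build_or, Gate.eval, Bool.or_eq_true, ← ih1, ← ih2]
    constructor
    · rintro (⟨Q1, Q2, hQ, h1, -⟩ | ⟨Q1, Q2, hQ, h1, h2⟩)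
      · obtain ⟨rfl, -⟩ := List.cons_append_append_singleton_inj hQ
          ((length_of_accepts_build b h1).trans (g1.pat_length a).symm)
        exact .inl h1
      · obtain ⟨-, rfl⟩ := List.cons_append_append_singleton_inj hQ
          (by rw [UGraph_matches'_length h1, g1.pat_length a]; have := g1.two_le_plen; omega)
        exact .inr h2
    · rintro (h1 | h2)
      exacts [.inl ⟨_, _, rfl, h1, g2.UGraph_matches'_pat a⟩,
        .inr ⟨_, _, rfl, g1.UGraph_matches'_pat a, h2⟩]

end build

/-- Main correctness of the PMLG gadget construction: the pattern `P_a(F)`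
(built from `a` and the formula alone) is matched by some source-to-sink
path of the graph `G_b(F)` (built from `b` and the formula alone) iff
`F(a, b) = 1`. -/
theorem stmt_10 (m : ℕ) (F : Gate m) (a b : Fin m → Bool) :
    (build b F).G.matches' (build b F).src (build b F).snk (F.pat a) ↔
      F.eval a b = true :=
  accepts_build_pat_iff b a F
end

section
/- Selection lemma for the final tree combination (subtree isomorphism): let T_A be a complete binary tree with 2^x leaves, each extended by a path of length x ending in a tree Sᵢ (i = 1,…,2^x, where S_i = T_{a_i} for i ≤ N and S_i = T_{a_N} for i > N), and let T_B be a complete binary tree with 2^x leaves where the first 2^x − 1 leaves are extended by paths of length x ending in a universal tree U containing every S_i, and the last leaf carries a second complete binary tree with 2^x leaves whose first N leaves carry trees T_{b_1},…,T_{b_N}. Assume all S_i have equal height and U, T_{b_j} have that same height. Then T_A embeds into T_B (injective, root-to-root, child-preserving) if and only if some S_i embeds into some T_{b_j}. -/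
/-- Rooted trees where every vertex has at most two children. -/
inductive BTree : Type where
  | leaf : BTree
  | node1 (t : BTree) : BTree
  | node2 (t1 t2 : BTree) : BTree

/-- Height: number of edges on a longest root-to-leaf path. -/
def BTree.height : BTree → ℕ
  | .leaf => 0
  | .node1 t => t.height + 1
  | .node2 t1 t2 => max t1.height t2.height + 1

/-- `Contains S T`: there is an injective root-to-root child-preserving
embedding of the rooted tree `S` into the rooted tree `T`, i.e. an
injective map `φ` from vertices of `S` to vertices of `T` with
`φ(root S) = root T` such that whenever `u` is a child of `v` in `S`,
`φ(u)` is a child of `φ(v)` in `T` (children are unordered). -/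
inductive Contains : BTree → BTree → Prop where
  | leaf (t : BTree) : Contains .leaf t
  | one1 {s t : BTree} : Contains s t → Contains (.node1 s) (.node1 t)
  | one2l {s t1 t2 : BTree} : Contains s t1 → Contains (.node1 s) (.node2 t1 t2)
  | one2r {s t1 t2 : BTree} : Contains s t2 → Contains (.node1 s) (.node2 t1 t2)
  | two {s1 s2 t1 t2 : BTree} :
      Contains s1 t1 → Contains s2 t2 → Contains (.node2 s1 s2) (.node2 t1 t2)
  | twoswap {s1 s2 t1 t2 : BTree} :
      Contains s1 t2 → Contains s2 t1 → Contains (.node2 s1 s2) (.node2 t1 t2)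

/-- The complete binary tree with `2^x` leaves whose leaves (numbered from
`off`) are replaced by the trees `f off, f (off+1), …`. -/
def cbt : ℕ → (ℕ → BTree) → ℕ → BTree
  | 0, f, off => f off
  | x + 1, f, off => .node2 (cbt x f off) (cbt x f (off + 2 ^ x))

/-- A path of `k` edges ending in the tree `t`. -/
def pathTo : ℕ → BTree → BTree
  | 0, t => t
  | k + 1, t => .node1 (pathTo k t)

/-- pointwise containment of cbt slots -/
lemma lemB : ∀ (k : ℕ) (f g : ℕ → BTree) (off off' : ℕ),
    (∀ i, i < 2 ^ k → Contains (f (off + i)) (g (off' + i))) →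
    Contains (cbt k f off) (cbt k g off') := by
  intro k
  induction k with
  | zero =>
    intro f g off off' h
    simpa [cbt] using h 0 (by norm_num)
  | succ k ih =>
    intro f g off off' h
    have hpow : (2:ℕ)^(k+1) = 2^k + 2^k := by ring
    refine Contains.two (ih f g off off' fun i hi => h i (by omega))
      (ih f g (off + 2 ^ k) (off' + 2 ^ k) fun i hi => ?_)
    have := h (2 ^ k + i) (by omega)
    simpa [Nat.add_assoc] using this

/-- path monotonicity -/
lemma lemPath {s t : BTree} (h : Contains s t) : ∀ k, Contains (pathTo k s) (pathTo k t) := by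
  intro k; induction k with
  | zero => simpa [pathTo] using h
  | succ k ih => exact Contains.one1 ih

/-- path embeds into cbt hitting slot j -/
lemma lemPC {s : BTree} : ∀ (k : ℕ) (g : ℕ → BTree) (off j : ℕ), j < 2 ^ k →
    Contains s (g (off + j)) → Contains (pathTo k s) (cbt k g off) := by
  intro k
  induction k with
  | zero =>
    intro g off j hj h
    interval_cases j
    simpa [cbt, pathTo] using h
  | succ k ih =>
    intro g off j hj h
    by_cases hc : j < 2 ^ k
    · exact Contains.one2l (ih g off j hc h)
    · refine Contains.one2r (ih g (off + 2 ^ k) (j - 2 ^ k) (by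
        have : (2:ℕ)^(k+1) = 2^k + 2^k := by ring
        omega) ?_)
      have : off + 2 ^ k + (j - 2 ^ k) = off + j := by omega
      rwa [this]

/-- selection lemma (backwards direction core) -/
lemma lemA : ∀ (k : ℕ) (f g : ℕ → BTree) (off off' : ℕ) (P Q : BTree) (i₀ : ℕ),
    i₀ < 2 ^ k →
    (∀ i, i < 2 ^ k - 1 → g (off' + i) = P) →
    g (off' + (2 ^ k - 1)) = Q →
    (∀ i, i < 2 ^ k → Contains (f (off + i)) P) →
    Contains (f (off + i₀)) Q →
    Contains (cbt k f off) (cbt k g off') := by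
  intro k
  induction k with
  | zero =>
    intro f g off off' P Q i₀ hi₀ hP hQ hall hq
    interval_cases i₀
    have hg : g off' = Q := by simpa using hQ
    simpa [cbt, hg] using hq
  | succ k ih =>
    intro f g off off' P Q i₀ hi₀ hP hQ hall hq
    have hpow : (2:ℕ)^(k+1) = 2^k + 2^k := by ring
    have h1 : (1:ℕ) ≤ 2 ^ k := Nat.one_le_two_pow
    -- left half of g is all P
    have gleftP : ∀ i, i < 2 ^ k → g (off' + i) = P := fun i hi => hP i (by omega)
    -- right half of g : slots
    have grightP : ∀ i, i < 2 ^ k - 1 → g ((off' + 2 ^ k) + i) = P := fun i hi => by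
      have := hP (2 ^ k + i) (by omega)
      rwa [← Nat.add_assoc] at this
    have grightQ : g ((off' + 2 ^ k) + (2 ^ k - 1)) = Q := by
      have : (off' + 2 ^ k) + (2 ^ k - 1) = off' + (2 ^ (k+1) - 1) := by omega
      rw [this, hQ]
    have fleftP : ∀ i, i < 2 ^ k → Contains (f (off + i)) P := fun i hi =>
      hall i (by omega)
    have frightP : ∀ i, i < 2 ^ k → Contains (f ((off + 2 ^ k) + i)) P := fun i hi => by
      have := hall (2 ^ k + i) (by omega)
      rwa [← Nat.add_assoc] at this
    -- lemma: any half of f into all-P left half of g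
    have intoLeft : ∀ o, (∀ i, i < 2 ^ k → Contains (f (o + i)) P) →
        Contains (cbt k f o) (cbt k g off') := fun o h =>
      lemB k f g o off' fun i hi => (gleftP i hi) ▸ h i hi
    by_cases hc : i₀ < 2 ^ k
    · -- i₀ in left half: twoswap
      exact Contains.twoswap
        (ih f g off (off' + 2 ^ k) P Q i₀ hc grightP grightQ fleftP hq)
        (intoLeft (off + 2 ^ k) frightP)
    · refine Contains.two (intoLeft off fleftP)
        (ih f g (off + 2 ^ k) (off' + 2 ^ k) P Q (i₀ - 2 ^ k) (by omega)
          grightP grightQ frightP ?_)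
      have : (off + 2 ^ k) + (i₀ - 2 ^ k) = off + i₀ := by omega
      rwa [this]

/-- forward: every slot of target cbt is hit -/
lemma lemFwd : ∀ (k : ℕ) (f g : ℕ → BTree) (off off' : ℕ),
    Contains (cbt k f off) (cbt k g off') →
    ∀ j, j < 2 ^ k → ∃ i, i < 2 ^ k ∧ Contains (f (off + i)) (g (off' + j)) := by
  intro k
  induction k with
  | zero =>
    intro f g off off' h j hj
    interval_cases j
    exact ⟨0, by norm_num, by simpa [cbt] using h⟩
  | succ k ih =>
    intro f g off off' h j hj
    have hpow : (2:ℕ)^(k+1) = 2^k + 2^k := by ring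
    cases h with
    | two h1 h2 =>
      by_cases hc : j < 2 ^ k
      · obtain ⟨i, hi, hci⟩ := ih f g off off' h1 j hc
        exact ⟨i, by omega, hci⟩
      · obtain ⟨i, hi, hci⟩ := ih f g (off + 2 ^ k) (off' + 2 ^ k) h2 (j - 2 ^ k) (by omega)
        refine ⟨2 ^ k + i, by omega, ?_⟩
        have e1 : off + (2 ^ k + i) = (off + 2 ^ k) + i := by omega
        have e2 : (off' + 2 ^ k) + (j - 2 ^ k) = off' + j := by omega
        rw [e1]; rwa [e2] at hci
    | twoswap h1 h2 =>
      by_cases hc : j < 2 ^ k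
      · obtain ⟨i, hi, hci⟩ := ih f g (off + 2 ^ k) off' h2 j hc
        refine ⟨2 ^ k + i, by omega, ?_⟩
        have e1 : off + (2 ^ k + i) = (off + 2 ^ k) + i := by omega
        rw [e1]; exact hci
      · obtain ⟨i, hi, hci⟩ := ih f g off (off' + 2 ^ k) h1 (j - 2 ^ k) (by omega)
        refine ⟨i, by omega, ?_⟩
        have e2 : (off' + 2 ^ k) + (j - 2 ^ k) = off' + j := by omega
        rwa [e2] at hci

/-- forward: path into cbt reaches some slot -/
lemma lemFwd2 {s : BTree} : ∀ (k : ℕ) (g : ℕ → BTree) (off : ℕ),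
    Contains (pathTo k s) (cbt k g off) →
    ∃ j, j < 2 ^ k ∧ Contains s (g (off + j)) := by
  intro k
  induction k with
  | zero =>
    intro g off h
    exact ⟨0, by norm_num, by simpa [cbt, pathTo] using h⟩
  | succ k ih =>
    intro g off h
    have hpow : (2:ℕ)^(k+1) = 2^k + 2^k := by ring
    rw [pathTo, cbt] at h
    cases h with
    | one2l h1 =>
      obtain ⟨j, hj, hc⟩ := ih g off h1
      exact ⟨j, by omega, hc⟩
    | one2r h1 =>
      obtain ⟨j, hj, hc⟩ := ih g (off + 2 ^ k) h1
      refine ⟨2 ^ k + j, by omega, ?_⟩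
      have : off + (2 ^ k + j) = (off + 2 ^ k) + j := by omega
      rw [this]; exact hc

lemma contains_leaf' {s : BTree} (h : Contains s .leaf) : s = .leaf := by
  cases h with
  | leaf => rfl


/-- Selection lemma for the final tree combination. `T_A` is a complete
binary tree with `2^x` leaves, each extended by a path of length `x` ending
in `Sᵢ` (where `Sᵢ = T_{a_i}` for `i < N` and `Sᵢ = T_{a_N}` beyond);
`T_B` is a complete binary tree with `2^x` leaves, the first `2^x - 1`
extended by paths of length `x` ending in the universal tree `U` (which
contains every `Sᵢ`), the last carrying a second complete binary tree whose
first `N` leaves carry `T_{b_1}, …, T_{b_N}`. If all the `Sᵢ`, `U`, and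
`T_{b_j}` have the same height `H`, then `T_A` embeds into `T_B`
(injectively, root-to-root, child-preservingly) iff some `Sᵢ` embeds into
some `T_{b_j}`. -/
theorem stmt_17 (x N : ℕ) (hN : 1 ≤ N) (hNx : N ≤ 2 ^ x)
    (S Tb : ℕ → BTree) (U : BTree) (H : ℕ)
    (hrep : ∀ i, N ≤ i → S i = S (N - 1))
    (hU : ∀ i, i < 2 ^ x → Contains (S i) U)
    (hhS : ∀ i, i < 2 ^ x → (S i).height = H)
    (hhU : U.height = H)
    (hhT : ∀ j, j < N → (Tb j).height = H) :
    letI TA := cbt x (fun i => pathTo x (S i)) 0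
    letI TB := cbt x (fun i =>
      if i < 2 ^ x - 1 then pathTo x U
      else cbt x (fun j => if j < N then Tb j else .leaf) 0) 0
    (Contains TA TB ↔ ∃ i < 2 ^ x, ∃ j < N, Contains (S i) (Tb j)) := by
  have h1 : (1:ℕ) ≤ 2 ^ x := Nat.one_le_two_pow
  set g : ℕ → BTree := fun i =>
    if i < 2 ^ x - 1 then pathTo x U
    else cbt x (fun j => if j < N then Tb j else .leaf) 0 with hgdef
  constructor
  · intro h
    obtain ⟨i, hi, hc⟩ := lemFwd x _ g 0 0 h (2 ^ x - 1) (by omega)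
    have hg : g (0 + (2 ^ x - 1)) = cbt x (fun j => if j < N then Tb j else .leaf) 0 := by
      simp [hgdef]
    rw [hg] at hc
    obtain ⟨j, hj, hc2⟩ := lemFwd2 x _ 0 hc
    simp only [Nat.zero_add] at hc hc2 ⊢
    by_cases hjN : j < N
    · exact ⟨i, hi, j, hjN, by simpa [hjN] using hc2⟩
    · rw [if_neg hjN] at hc2
      have hse := contains_leaf' hc2
      exact ⟨i, hi, 0, hN, hse ▸ Contains.leaf (Tb 0)⟩
  · rintro ⟨i, hi, j, hj, hc⟩
    refine lemA x (fun i => pathTo x (S i)) g 0 0 (pathTo x U)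
      (cbt x (fun j => if j < N then Tb j else .leaf) 0) i hi ?_ ?_ ?_ ?_
    · intro t ht
      simp only [hgdef, Nat.zero_add]
      rw [if_pos ht]
    · simp [hgdef]
    · intro t ht
      simp only [Nat.zero_add]
      exact lemPath (hU t ht) x
    · simp only [Nat.zero_add]
      refine lemPC x _ 0 j (lt_of_lt_of_le hj hNx) ?_
      simp only [Nat.zero_add, if_pos hj]
      exact hc
end
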